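/- arXiv:2605.30886 — 4 statements merged into one kernel-verified Lean document; each statement's English description precedes it below -/
import Mathlib

section
/- Let A be a d×d real matrix, B a d×m real matrix, and Σ an m×m symmetric positive semidefinite matrix. Define Ψ(δ) = ∫₀^δ exp((δ − s)A) B ds and K(δ) = ∫₀^δ exp((δ − s)A) B Σ Bᵀ exp((δ − s)Aᵀ) ds. Then there exists a constant C > 0, depending only on A, B, Σ, such that for all δ ∈ (0, 1]: ‖Ψ(δ) Σ Ψ(δ)ᵀ − δ·K(δ)‖ ≤ C δ⁴, where ‖·‖ is the operator norm. In particular, the second- and third-order Taylor terms of the two covariances cancel exactly. -/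
open MeasureTheory Matrix
open scoped Matrix.Norms.L2Operator

/-!
With `f s = exp ((δ - s) A) B`, the difference `Ψ Σ Ψᵀ - δ K` is minus the covariance-type defect
`δ ∫₀^δ f Σ fᵀ - (∫₀^δ f) Σ (∫₀^δ f)ᵀ` (a Jensen gap). The defect does not change when a constant
is subtracted from `f`; after subtracting `f δ = B` the integrand is `O(δ)` on `[0, δ]`, so both
terms of the defect are `O(δ⁴)`.
-/

theorem ContinuousLinearMap.intervalIntegrable_comp {E F : Type*} [NormedAddCommGroup E]
    [NormedSpace ℝ E] [NormedAddCommGroup F] [NormedSpace ℝ F] (L : E →L[ℝ] F) {f : ℝ → E}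
    {μ : Measure ℝ} {a b : ℝ} (hf : IntervalIntegrable f μ a b) :
    IntervalIntegrable (fun x => L (f x)) μ a b :=
  ⟨L.integrable_comp hf.1, L.integrable_comp hf.2⟩

namespace Matrix

variable {ι κ ν : Type*} [Fintype ι] [Fintype κ] [Fintype ν] {a b : ℝ}

theorem intervalIntegral_mul_const [DecidableEq κ] [DecidableEq ν] {f : ℝ → Matrix ι κ ℝ}
    (hf : IntervalIntegrable f volume a b) (M : Matrix κ ν ℝ) :
    ∫ x in a..b, f x * M = (∫ x in a..b, f x) * M :=
  ((mulRightLinearMap ι ℝ M).toContinuousLinearMap).intervalIntegral_comp_comm hf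

theorem intervalIntegral_const_mul [DecidableEq ν] {f : ℝ → Matrix κ ν ℝ}
    (hf : IntervalIntegrable f volume a b) (M : Matrix ι κ ℝ) :
    ∫ x in a..b, M * f x = M * ∫ x in a..b, f x :=
  ((mulLeftLinearMap ν ℝ M).toContinuousLinearMap).intervalIntegral_comp_comm hf

theorem intervalIntegral_transpose [DecidableEq ι] [DecidableEq κ] {f : ℝ → Matrix ι κ ℝ}
    (hf : IntervalIntegrable f volume a b) :
    ∫ x in a..b, (f x)ᵀ = (∫ x in a..b, f x)ᵀ :=
  ((transposeLinearEquiv ι κ ℝ ℝ).toLinearMap.toContinuousLinearMap).intervalIntegral_comp_comm hf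

theorem l2_opNorm_transpose [DecidableEq ι] [DecidableEq κ] (X : Matrix ι κ ℝ) : ‖Xᵀ‖ = ‖X‖ := by
  rw [← conjTranspose_eq_transpose_of_trivial, l2_opNorm_conjTranspose]

theorem l2_opNorm_mul_mul_transpose_le [DecidableEq ι] [DecidableEq κ] (X : Matrix ι κ ℝ)
    (S : Matrix κ κ ℝ) : ‖X * S * Xᵀ‖ ≤ ‖X‖ ^ 2 * ‖S‖ := by
  calc ‖X * S * Xᵀ‖ ≤ ‖X‖ * ‖S‖ * ‖Xᵀ‖ :=
        (l2_opNorm_mul _ _).trans (mul_le_mul_of_nonneg_right (l2_opNorm_mul _ _) (norm_nonneg _))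
    _ = ‖X‖ ^ 2 * ‖S‖ := by rw [l2_opNorm_transpose]; ring

variable [DecidableEq ι] [DecidableEq κ]

/-- `(b - a)²` times the `S`-weighted covariance of `f U` for `U` uniform on `[a, b]`. -/
noncomputable def intervalGramDefect (S : Matrix κ κ ℝ) (a b : ℝ)
    (f : ℝ → Matrix ι κ ℝ) : Matrix ι ι ℝ :=
  (b - a) • (∫ x in a..b, f x * S * (f x)ᵀ) - (∫ x in a..b, f x) * S * (∫ x in a..b, f x)ᵀ

theorem intervalGramDefect_add_const (S : Matrix κ κ ℝ) {f : ℝ → Matrix ι κ ℝ}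
    (hf : IntervalIntegrable f volume a b)
    (hfSf : IntervalIntegrable (fun x => f x * S * (f x)ᵀ) volume a b) (c : Matrix ι κ ℝ) :
    intervalGramDefect S a b (fun x => f x + c) = intervalGramDefect S a b f := by
  have hfT : IntervalIntegrable (fun x => (f x)ᵀ) volume a b :=
    (transposeLinearEquiv ι κ ℝ ℝ).toLinearMap.toContinuousLinearMap.intervalIntegrable_comp hf
  have hfS : IntervalIntegrable (fun x => f x * (S * cᵀ)) volume a b :=
    (mulRightLinearMap ι ℝ (S * cᵀ)).toContinuousLinearMap.intervalIntegrable_comp hf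
  have hSf : IntervalIntegrable (fun x => c * S * (f x)ᵀ) volume a b :=
    (mulLeftLinearMap ι ℝ (c * S)).toContinuousLinearMap.intervalIntegrable_comp hfT
  have hsq : ∫ x in a..b, (f x + c) * S * (f x + c)ᵀ =
      (∫ x in a..b, f x * S * (f x)ᵀ) + (∫ x in a..b, f x) * (S * cᵀ)
        + c * S * (∫ x in a..b, f x)ᵀ + (b - a) • (c * S * cᵀ) := by
    have hexpand : ∀ x, (f x + c) * S * (f x + c)ᵀ =
        f x * S * (f x)ᵀ + f x * (S * cᵀ) + c * S * (f x)ᵀ + c * S * cᵀ := fun x => by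
      simp only [transpose_add, Matrix.add_mul, Matrix.mul_add, Matrix.mul_assoc]; abel
    simp only [hexpand]
    rw [intervalIntegral.integral_add ((hfSf.add hfS).add hSf) intervalIntegrable_const,
      intervalIntegral.integral_add (hfSf.add hfS) hSf, intervalIntegral.integral_add hfSf hfS,
      intervalIntegral_mul_const hf, intervalIntegral_const_mul hfT,
      intervalIntegral_transpose hf, intervalIntegral.integral_const]
  have hlin : ∫ x in a..b, (f x + c) = (∫ x in a..b, f x) + (b - a) • c := by
    rw [intervalIntegral.integral_add hf intervalIntegrable_const, intervalIntegral.integral_const]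
  rw [intervalGramDefect, intervalGramDefect, hsq, hlin]
  simp only [transpose_add, transpose_smul, Matrix.add_mul, Matrix.mul_add, Matrix.smul_mul,
    Matrix.mul_smul, smul_add, smul_smul, Matrix.mul_assoc]
  abel

theorem norm_intervalGramDefect_le (S : Matrix κ κ ℝ) {f : ℝ → Matrix ι κ ℝ} {M : ℝ}
    (hM : ∀ x ∈ Set.uIoc a b, ‖f x‖ ≤ M) :
    ‖intervalGramDefect S a b f‖ ≤ 2 * (b - a) ^ 2 * M ^ 2 * ‖S‖ := by
  have hgram : ‖∫ x in a..b, f x * S * (f x)ᵀ‖ ≤ M ^ 2 * ‖S‖ * |b - a| :=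
    intervalIntegral.norm_integral_le_of_norm_le_const fun x hx =>
      (l2_opNorm_mul_mul_transpose_le _ _).trans (by gcongr; exact hM x hx)
  have hmean : ‖∫ x in a..b, f x‖ ≤ M * |b - a| :=
    intervalIntegral.norm_integral_le_of_norm_le_const hM
  calc ‖intervalGramDefect S a b f‖
      ≤ ‖(b - a) • ∫ x in a..b, f x * S * (f x)ᵀ‖
        + ‖(∫ x in a..b, f x) * S * (∫ x in a..b, f x)ᵀ‖ := norm_sub_le _ _
    _ ≤ |b - a| * (M ^ 2 * ‖S‖ * |b - a|) + (M * |b - a|) ^ 2 * ‖S‖ := by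
        rw [norm_smul, Real.norm_eq_abs]
        gcongr
        exact (l2_opNorm_mul_mul_transpose_le _ _).trans (by gcongr)
    _ = 2 * (b - a) ^ 2 * M ^ 2 * ‖S‖ := by rw [← sq_abs (b - a)]; ring

end Matrix

theorem exists_norm_exp_smul_sub_one_le {𝔸 : Type*} [NormedRing 𝔸] [NormedAlgebra ℝ 𝔸]
    [CompleteSpace 𝔸] (a : 𝔸) :
    ∃ C, 0 ≤ C ∧ ∀ t ∈ Set.Icc (0 : ℝ) 1, ‖NormedSpace.exp (t • a) - 1‖ ≤ C * t := by
  have hderiv : Continuous fun u : ℝ => a * NormedSpace.exp (u • a) :=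
    continuous_const.mul (differentiable_exp_smul_const ℝ a).continuous
  obtain ⟨C, hC⟩ :=
    isCompact_Icc.exists_bound_of_continuousOn (hderiv.continuousOn (s := Set.Icc (0 : ℝ) 1))
  refine ⟨max C 0, le_max_right _ _, fun t ht => ?_⟩
  have := Convex.norm_image_sub_le_of_norm_hasDerivWithin_le
    (fun u _ => (hasDerivAt_exp_smul_const' a u).hasDerivWithinAt)
    (fun u hu => (hC u hu).trans (le_max_left C 0)) (convex_Icc 0 1) ⟨le_rfl, zero_le_one⟩ ht
  rwa [zero_smul, NormedSpace.exp_zero, sub_zero, Real.norm_of_nonneg ht.1] at this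

theorem Matrix.exists_norm_exp_smul_mul_sub_le {n k : Type*} [Fintype n] [Fintype k]
    [DecidableEq n] [DecidableEq k] (A : Matrix n n ℝ) (B : Matrix n k ℝ) :
    ∃ L, 0 ≤ L ∧ ∀ t ∈ Set.Icc (0 : ℝ) 1, ‖NormedSpace.exp (t • A) * B - B‖ ≤ L * t := by
  obtain ⟨C, hC, hexp⟩ := exists_norm_exp_smul_sub_one_le A
  refine ⟨C * ‖B‖, by positivity, fun t ht => ?_⟩
  calc ‖NormedSpace.exp (t • A) * B - B‖ = ‖(NormedSpace.exp (t • A) - 1) * B‖ := by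
        rw [Matrix.sub_mul, Matrix.one_mul]
    _ ≤ C * t * ‖B‖ := (l2_opNorm_mul _ _).trans (by gcongr; exact hexp t ht)
    _ = C * ‖B‖ * t := by ring

theorem exact_vs_surrogate_covariance_match_general (d m : ℕ) (A : Matrix (Fin d) (Fin d) ℝ)
    (B : Matrix (Fin d) (Fin m) ℝ) (S : Matrix (Fin m) (Fin m) ℝ) :
    ∃ C : ℝ, 0 < C ∧ ∀ δ : ℝ, 0 < δ → δ ≤ 1 →
      ‖(∫ s in (0 : ℝ)..δ, NormedSpace.exp ((δ - s) • A) * B) * S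
            * (∫ s in (0 : ℝ)..δ, NormedSpace.exp ((δ - s) • A) * B)ᵀ
          - δ • (∫ s in (0 : ℝ)..δ,
              NormedSpace.exp ((δ - s) • A) * B * S * Bᵀ
                * NormedSpace.exp ((δ - s) • Aᵀ))‖ ≤ C * δ ^ 4 := by
  obtain ⟨L, hL, hexp⟩ := exists_norm_exp_smul_mul_sub_le A B
  refine ⟨2 * L ^ 2 * ‖S‖ + 1, by positivity, fun δ hδ hδ1 => ?_⟩
  set f : ℝ → Matrix (Fin d) (Fin m) ℝ := fun s => NormedSpace.exp ((δ - s) • A) * B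
  have hf : Continuous f :=
    ((differentiable_exp_smul_const ℝ A).continuous.comp
      (continuous_const.sub continuous_id)).matrix_mul continuous_const
  have hK : ∀ s, NormedSpace.exp ((δ - s) • A) * B * S * Bᵀ * NormedSpace.exp ((δ - s) • Aᵀ)
      = f s * S * (f s)ᵀ := fun s => by
    rw [← transpose_smul, exp_transpose]
    simp only [f, transpose_mul, Matrix.mul_assoc]
  have hgap : (∫ s in (0 : ℝ)..δ, f s) * S * (∫ s in (0 : ℝ)..δ, f s)ᵀ
      - δ • (∫ s in (0 : ℝ)..δ, f s * S * (f s)ᵀ) = -intervalGramDefect S 0 δ f := by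
    rw [intervalGramDefect, sub_zero, neg_sub]
  have hg : Continuous fun s => f s - B := hf.sub continuous_const
  have hshift := intervalGramDefect_add_const S (hg.intervalIntegrable 0 δ)
    (((hg.matrix_mul continuous_const).matrix_mul hg.matrix_transpose).intervalIntegrable 0 δ) B
  simp only [sub_add_cancel] at hshift
  have hclose : ∀ s ∈ Set.uIoc 0 δ, ‖f s - B‖ ≤ L * δ := fun s hs => by
    rw [Set.uIoc_of_le hδ.le] at hs
    exact (hexp _ ⟨by linarith [hs.2], by linarith [hs.1]⟩).trans (by nlinarith [hs.1])
  simp only [hK]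
  rw [hgap, norm_neg, hshift]
  calc ‖intervalGramDefect S 0 δ fun s => f s - B‖
      ≤ 2 * (δ - 0) ^ 2 * (L * δ) ^ 2 * ‖S‖ := norm_intervalGramDefect_le S hclose
    _ = 2 * L ^ 2 * ‖S‖ * δ ^ 4 := by ring
    _ ≤ (2 * L ^ 2 * ‖S‖ + 1) * δ ^ 4 := by gcongr; linarith

/-- Fourth-order covariance matching: with
`Ψ(δ) = ∫₀^δ exp((δ−s)A) B ds` and
`K(δ) = ∫₀^δ exp((δ−s)A) B Σ Bᵀ exp((δ−s)Aᵀ) ds`, there is `C > 0` (depending only on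
`A, B, Σ`) such that `‖Ψ(δ) Σ Ψ(δ)ᵀ − δ·K(δ)‖ ≤ C δ⁴` for all `δ ∈ (0, 1]`, in the
operator norm (the second- and third-order Taylor terms cancel exactly). -/
theorem exact_vs_surrogate_covariance_match (d m : ℕ) (A : Matrix (Fin d) (Fin d) ℝ)
    (B : Matrix (Fin d) (Fin m) ℝ) (S : Matrix (Fin m) (Fin m) ℝ) (hS : S.PosSemidef) :
    ∃ C : ℝ, 0 < C ∧ ∀ δ : ℝ, 0 < δ → δ ≤ 1 →
      ‖(∫ s in (0 : ℝ)..δ, NormedSpace.exp ((δ - s) • A) * B) * S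
            * (∫ s in (0 : ℝ)..δ, NormedSpace.exp ((δ - s) • A) * B)ᵀ
          - δ • (∫ s in (0 : ℝ)..δ,
              NormedSpace.exp ((δ - s) • A) * B * S * Bᵀ
                * NormedSpace.exp ((δ - s) • Aᵀ))‖ ≤ C * δ ^ 4 :=
  exact_vs_surrogate_covariance_match_general d m A B S
end

section
/- Let A be a d×d real matrix, B a d×m real matrix, Σ an m×m symmetric positive semidefinite matrix, and Q a d×d symmetric positive definite matrix. With Ψ(t) = ∫₀^t exp((t − s)A) B ds and K(t) = ∫₀^t exp((t − s)A) B Σ Bᵀ exp((t − s)Aᵀ) ds, there exists a constant C > 0, depending only on A, B, Σ, Q, such that for all δ ∈ (0, 1]: | ∫₀^δ tr( Q · ( Ψ(t) Σ Ψ(t)ᵀ − t·K(t) ) ) dt | ≤ C δ⁵. -/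
open MeasureTheory Matrix
open scoped Matrix.Norms.L2Operator

/-!
Write `G s = exp (s A) B`. The matrix inside the trace is `(∫₀ᵗ G) S (∫₀ᵗ G)ᵀ - t ∫₀ᵗ G S Gᵀ`,
a variance-type gap of the bilinear form `(X, Y) ↦ X S Yᵀ` along `G` on `[0, t]`. Like a
variance, it is unchanged when the constant `G 0 = B` is subtracted from `G`, and
`‖G s - B‖ = O(s)` because `G` is smooth; so the gap is `O(t⁴)`, and its integral over `[0, δ]`
is `O(δ⁵)`.
-/

section JensenGap

variable {E F : Type*} [NormedAddCommGroup E] [NormedSpace ℝ E]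
  [NormedAddCommGroup F] [NormedSpace ℝ F]

/-- `t²` times the Jensen gap `β(f̄, f̄) - (β(f, f))‾` of the quadratic form of `β`, where `‾`
is the mean over `[0, t]`. -/
noncomputable def jensenGap (β : E →L[ℝ] E →L[ℝ] F) (f : ℝ → E) (t : ℝ) : F :=
  β (∫ s in (0 : ℝ)..t, f s) (∫ s in (0 : ℝ)..t, f s) - t • ∫ s in (0 : ℝ)..t, β (f s) (f s)

theorem jensenGap_add_const [CompleteSpace E] [CompleteSpace F] (β : E →L[ℝ] E →L[ℝ] F)
    {g : ℝ → E} (hg : Continuous g) (M : E) (t : ℝ) :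
    jensenGap β (fun s => g s + M) t = jensenGap β g t := by
  set L := β.flip M + β M
  have hmean : ∫ s in (0 : ℝ)..t, (g s + M) = (∫ s in (0 : ℝ)..t, g s) + t • M := by
    rw [intervalIntegral.integral_add (hg.intervalIntegrable _ _) intervalIntegrable_const,
      intervalIntegral.integral_const, sub_zero]
  have hexpand : ∀ s, β (g s + M) (g s + M) = β (g s) (g s) + L (g s) + β M M := fun s => by
    simp only [L, map_add, _root_.add_apply, ContinuousLinearMap.flip_apply]; abel
  have hsquare : ∫ s in (0 : ℝ)..t, β (g s + M) (g s + M)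
      = (∫ s in (0 : ℝ)..t, β (g s) (g s)) + L (∫ s in (0 : ℝ)..t, g s) + t • β M M := by
    have hβg : IntervalIntegrable (fun s => β (g s) (g s)) volume 0 t :=
      Continuous.intervalIntegrable (by fun_prop) _ _
    have hLg : IntervalIntegrable (fun s => L (g s)) volume 0 t :=
      Continuous.intervalIntegrable (by fun_prop) _ _
    simp only [hexpand]
    rw [intervalIntegral.integral_add (hβg.add hLg) intervalIntegrable_const,
      intervalIntegral.integral_add hβg hLg,
      L.intervalIntegral_comp_comm (hg.intervalIntegrable _ _),
      intervalIntegral.integral_const, sub_zero]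
  rw [jensenGap, jensenGap, hmean, hsquare]
  simp only [L, map_add, map_smul, _root_.add_apply, _root_.smul_apply,
    ContinuousLinearMap.flip_apply]
  module

theorem norm_jensenGap_le (β : E →L[ℝ] E →L[ℝ] F) {b : ℝ} (hb : 0 ≤ b)
    (hβ : ∀ x y, ‖β x y‖ ≤ b * ‖x‖ * ‖y‖) {f : ℝ → E} {ε t : ℝ}
    (hf : ∀ s ∈ Set.uIoc 0 t, ‖f s‖ ≤ ε) : ‖jensenGap β f t‖ ≤ 2 * b * ε ^ 2 * t ^ 2 := by
  have hmean : ‖∫ s in (0 : ℝ)..t, f s‖ ≤ ε * |t| := by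
    simpa using intervalIntegral.norm_integral_le_of_norm_le_const hf
  have hsquare : ‖∫ s in (0 : ℝ)..t, β (f s) (f s)‖ ≤ b * ε ^ 2 * |t| := by
    refine (intervalIntegral.norm_integral_le_of_norm_le_const fun s hs => ?_).trans_eq
      (by rw [sub_zero])
    have hε : 0 ≤ ε := (norm_nonneg _).trans (hf s hs)
    calc ‖β (f s) (f s)‖ ≤ b * ‖f s‖ * ‖f s‖ := hβ _ _
      _ ≤ b * ε * ε := by gcongr <;> exact hf s hs
      _ = b * ε ^ 2 := by ring
  have hε : 0 ≤ ε * |t| := (norm_nonneg _).trans hmean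
  calc ‖jensenGap β f t‖
      ≤ b * ‖∫ s in (0 : ℝ)..t, f s‖ * ‖∫ s in (0 : ℝ)..t, f s‖
        + |t| * ‖∫ s in (0 : ℝ)..t, β (f s) (f s)‖ := by
        refine (norm_sub_le _ _).trans (add_le_add (hβ _ _) ?_)
        rw [norm_smul, Real.norm_eq_abs]
    _ ≤ b * (ε * |t|) * (ε * |t|) + |t| * (b * ε ^ 2 * |t|) := by gcongr
    _ = 2 * b * ε ^ 2 * t ^ 2 := by rw [← sq_abs t]; ring

end JensenGap

theorem ContDiff.exists_norm_sub_le_mul {F : Type*} [NormedAddCommGroup F] [NormedSpace ℝ F]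
    {f : ℝ → F} (hf : ContDiff ℝ 1 f) :
    ∃ c : ℝ, 0 ≤ c ∧ ∀ s ∈ Set.Icc (0 : ℝ) 1, ‖f s - f 0‖ ≤ c * s := by
  obtain ⟨K, hK⟩ := hf.contDiffOn.exists_lipschitzOnWith one_ne_zero (convex_Icc 0 1)
    isCompact_Icc
  refine ⟨K, K.2, fun s hs => ?_⟩
  simpa [abs_of_nonneg hs.1] using hK.norm_sub_le hs (Set.left_mem_Icc.2 zero_le_one)

section MatrixCost

variable {n m : Type*} [Fintype n] [Fintype m]

noncomputable def sandwichCLM (S : Matrix m m ℝ) :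
    Matrix n m ℝ →L[ℝ] Matrix n m ℝ →L[ℝ] Matrix n n ℝ :=
  LinearMap.toContinuousLinearMap <| LinearMap.toContinuousLinearMap.toLinearMap ∘ₗ
    LinearMap.mk₂ ℝ (fun X Y => X * S * Yᵀ) (fun X X' Y => by simp only [Matrix.add_mul])
      (fun c X Y => by simp only [Matrix.smul_mul]) (fun X Y Y' => by
        simp only [Matrix.transpose_add, Matrix.mul_add])
      (fun c X Y => by simp only [Matrix.transpose_smul, Matrix.mul_smul])

@[simp]
theorem sandwichCLM_apply (S : Matrix m m ℝ) (X Y : Matrix n m ℝ) :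
    sandwichCLM S X Y = X * S * Yᵀ := rfl

theorem norm_sandwichCLM_apply_le [DecidableEq n] [DecidableEq m] (S : Matrix m m ℝ)
    (X Y : Matrix n m ℝ) : ‖sandwichCLM S X Y‖ ≤ ‖S‖ * ‖X‖ * ‖Y‖ := by
  have hY : ‖Yᵀ‖ = ‖Y‖ := by
    rw [← conjTranspose_eq_transpose_of_trivial, l2_opNorm_conjTranspose]
  calc ‖X * S * Yᵀ‖ ≤ ‖X‖ * ‖S‖ * ‖Yᵀ‖ :=
        (l2_opNorm_mul _ _).trans (by gcongr; exact l2_opNorm_mul _ _)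
    _ = ‖S‖ * ‖X‖ * ‖Y‖ := by rw [hY]; ring

theorem covariance_gap_eq_jensenGap [DecidableEq n] [DecidableEq m] (A : Matrix n n ℝ)
    (B : Matrix n m ℝ) (S : Matrix m m ℝ) (t : ℝ) :
    (∫ s in (0 : ℝ)..t, NormedSpace.exp ((t - s) • A) * B) * S
        * (∫ s in (0 : ℝ)..t, NormedSpace.exp ((t - s) • A) * B)ᵀ
      - t • (∫ s in (0 : ℝ)..t,
          NormedSpace.exp ((t - s) • A) * B * S * Bᵀ * NormedSpace.exp ((t - s) • Aᵀ))
      = jensenGap (sandwichCLM S) (fun s => NormedSpace.exp (s • A) * B) t := by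
  have hΨ := intervalIntegral.integral_comp_sub_left (a := 0) (b := t)
    (fun s => NormedSpace.exp (s • A) * B) t
  have hK := intervalIntegral.integral_comp_sub_left (a := 0) (b := t)
    (fun s => sandwichCLM S (NormedSpace.exp (s • A) * B) (NormedSpace.exp (s • A) * B)) t
  simp only [sub_self, sub_zero] at hΨ hK
  rw [jensenGap, ← hΨ, ← hK]
  simp only [sandwichCLM_apply, ← Matrix.transpose_smul, Matrix.exp_transpose,
    Matrix.transpose_mul, Matrix.mul_assoc]

theorem contDiff_exp_smul_mul [DecidableEq n] [DecidableEq m] (A : Matrix n n ℝ)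
    (B : Matrix n m ℝ) :
    ContDiff ℝ 1 fun s : ℝ => NormedSpace.exp (s • A) * B := by
  have hexp : ContDiff ℝ 1 fun s : ℝ => NormedSpace.exp (s • A) :=
    contDiff_iff_contDiffAt.2 fun s =>
      (NormedSpace.exp_analytic (𝕂 := ℝ) (s • A)).contDiffAt.comp s (by fun_prop)
  exact (LinearMap.toContinuousLinearMap (mulRightLinearMap n ℝ B)).contDiff.comp hexp

theorem exists_norm_jensenGap_exp_smul_mul_le [DecidableEq n] [DecidableEq m] (A : Matrix n n ℝ)
    (B : Matrix n m ℝ) (S : Matrix m m ℝ) :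
    ∃ c : ℝ, 0 ≤ c ∧ ∀ t : ℝ, 0 < t → t ≤ 1 →
      ‖jensenGap (sandwichCLM S) (fun s => NormedSpace.exp (s • A) * B) t‖ ≤ c * t ^ 4 := by
  have hexp := contDiff_exp_smul_mul A B
  obtain ⟨c, hc, hlip⟩ := hexp.exists_norm_sub_le_mul
  simp only [zero_smul, NormedSpace.exp_zero, Matrix.one_mul] at hlip
  refine ⟨2 * ‖S‖ * c ^ 2, by positivity, fun t ht0 ht1 => ?_⟩
  have hsmall : ∀ s ∈ Set.uIoc 0 t, ‖NormedSpace.exp (s • A) * B - B‖ ≤ c * t := by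
    intro s hs
    rw [Set.uIoc_of_le ht0.le] at hs
    calc _ ≤ c * s := hlip s ⟨hs.1.le, hs.2.trans ht1⟩
      _ ≤ c * t := by gcongr; exact hs.2
  have hgap := norm_jensenGap_le (sandwichCLM S) (norm_nonneg S) (norm_sandwichCLM_apply_le S)
    hsmall
  rw [← jensenGap_add_const (sandwichCLM S) (g := fun s => NormedSpace.exp (s • A) * B - B)
    (hexp.continuous.sub continuous_const) B] at hgap
  simp only [sub_add_cancel] at hgap
  exact hgap.trans_eq (by ring)

theorem exists_abs_trace_mul_le [DecidableEq n] (Q : Matrix n n ℝ) :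
    ∃ c : ℝ, 0 ≤ c ∧ ∀ X : Matrix n n ℝ, |trace (Q * X)| ≤ c * ‖X‖ := by
  let T : Matrix n n ℝ →L[ℝ] ℝ :=
    LinearMap.toContinuousLinearMap (traceLinearMap n ℝ ℝ ∘ₗ LinearMap.mulLeft ℝ Q)
  exact ⟨‖T‖, T.opNorm_nonneg, T.le_opNorm⟩

end MatrixCost

theorem accumulated_cost_match_general (d m : ℕ) (A : Matrix (Fin d) (Fin d) ℝ)
    (B : Matrix (Fin d) (Fin m) ℝ) (S : Matrix (Fin m) (Fin m) ℝ)
    (Q : Matrix (Fin d) (Fin d) ℝ) :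
    ∃ C : ℝ, 0 < C ∧ ∀ δ : ℝ, 0 < δ → δ ≤ 1 →
      |∫ t in (0 : ℝ)..δ,
          Matrix.trace (Q *
            ((∫ s in (0 : ℝ)..t, NormedSpace.exp ((t - s) • A) * B) * S
                * (∫ s in (0 : ℝ)..t, NormedSpace.exp ((t - s) • A) * B)ᵀ
              - t • (∫ s in (0 : ℝ)..t,
                  NormedSpace.exp ((t - s) • A) * B * S * Bᵀ
                    * NormedSpace.exp ((t - s) • Aᵀ))))| ≤ C * δ ^ 5 := by
  obtain ⟨c, hc, hgap⟩ := exists_norm_jensenGap_exp_smul_mul_le A B S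
  obtain ⟨q, hq, htrace⟩ := exists_abs_trace_mul_le Q
  refine ⟨q * c + 1, by positivity, fun δ hδ hδ1 => ?_⟩
  rw [← Real.norm_eq_abs]
  refine (intervalIntegral.norm_integral_le_of_norm_le_const (C := (q * c + 1) * δ ^ 4)
    fun t ht => ?_).trans_eq (by rw [sub_zero, abs_of_pos hδ]; ring)
  rw [Set.uIoc_of_le hδ.le] at ht
  rw [covariance_gap_eq_jensenGap, Real.norm_eq_abs]
  calc _ ≤ q * (c * t ^ 4) := (htrace _).trans (by gcongr; exact hgap t ht.1 (ht.2.trans hδ1))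
    _ ≤ (q * c + 1) * δ ^ 4 := by rw [← mul_assoc]; gcongr; exacts [by linarith, ht.1.le, ht.2]

/-- Fifth-order accumulated-cost matching: with
`Ψ(t) = ∫₀^t exp((t−s)A) B ds` and `K(t) = ∫₀^t exp((t−s)A) B Σ Bᵀ exp((t−s)Aᵀ) ds`,
and `Q` symmetric positive definite, there is `C > 0` (depending only on `A, B, Σ, Q`)
with `|∫₀^δ tr(Q (Ψ(t) Σ Ψ(t)ᵀ − t·K(t))) dt| ≤ C δ⁵` for all `δ ∈ (0, 1]`. -/
theorem accumulated_cost_match (d m : ℕ) (A : Matrix (Fin d) (Fin d) ℝ)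
    (B : Matrix (Fin d) (Fin m) ℝ) (S : Matrix (Fin m) (Fin m) ℝ) (hS : S.PosSemidef)
    (Q : Matrix (Fin d) (Fin d) ℝ) (hQ : Q.PosDef) :
    ∃ C : ℝ, 0 < C ∧ ∀ δ : ℝ, 0 < δ → δ ≤ 1 →
      |∫ t in (0 : ℝ)..δ,
          Matrix.trace (Q *
            ((∫ s in (0 : ℝ)..t, NormedSpace.exp ((t - s) • A) * B) * S
                * (∫ s in (0 : ℝ)..t, NormedSpace.exp ((t - s) • A) * B)ᵀ
              - t • (∫ s in (0 : ℝ)..t,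
                  NormedSpace.exp ((t - s) • A) * B * S * Bᵀ
                    * NormedSpace.exp ((t - s) • Aᵀ))))| ≤ C * δ ^ 5 :=
  accumulated_cost_match_general d m A B S Q
end

section
/- Let R be a d×d real symmetric positive definite matrix, b ∈ ℝ^d, λ₀ ≥ 0, and c ≥ ‖(R + λ₀ I)⁻¹ b‖². Then the function g(λ) = bᵀ(R + λI)⁻¹ b + λ c is monotone nondecreasing on [λ₀, ∞); in particular g(λ) ≥ g(λ₀) for all λ ≥ λ₀, so the infimum of g over [λ₀, ∞) is attained at λ₀. -/
/-!
Write `p = (R + xI)⁻¹b` and `q = (R + yI)⁻¹b` for `x ≤ y`. The resolvent identity gives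
`p - q = (y - x)(R + xI)⁻¹q = (y - x)(R + yI)⁻¹p`, hence `g(x) - g(y) = (y - x)(p ⬝ q - c)` and,
by positivity of the inverses, `q ⬝ q ≤ p ⬝ q ≤ p ⬝ p`. So `‖(R + λI)⁻¹b‖²` decreases in `λ`, and
`p ⬝ q ≤ ‖(R + λ₀I)⁻¹b‖² ≤ c` once `λ₀ ≤ x`.
-/

open Matrix

namespace Matrix

variable {n α : Type*} [Fintype n] [DecidableEq n]

theorem inv_sub_inv_add_smul_one [CommRing α] {A : Matrix n n α} {t : α}
    (h : IsUnit A ↔ IsUnit (A + t • 1)) :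
    A⁻¹ - (A + t • 1)⁻¹ = t • (A⁻¹ * (A + t • 1)⁻¹) := by
  rw [inv_sub_inv h, add_sub_cancel_left, Matrix.mul_smul, mul_one, Matrix.smul_mul]

theorem inv_sub_inv_add_smul_one' [CommRing α] {A : Matrix n n α} {t : α}
    (h : IsUnit A ↔ IsUnit (A + t • 1)) :
    A⁻¹ - (A + t • 1)⁻¹ = t • ((A + t • 1)⁻¹ * A⁻¹) := by
  rw [← neg_sub, inv_sub_inv h.symm, sub_add_cancel_left, Matrix.mul_neg, Matrix.neg_mul, neg_neg,
    Matrix.mul_smul, mul_one, Matrix.smul_mul]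

omit [Fintype n] in
theorem PosDef.add_smul_one {A : Matrix n n ℝ} (hA : A.PosDef) {t : ℝ} (ht : 0 ≤ t) :
    (A + t • 1).PosDef :=
  hA.add_posSemidef (PosSemidef.one.smul ht)

omit [DecidableEq n] in
theorem IsHermitian.dotProduct_mulVec_comm {A : Matrix n n ℝ} (hA : A.IsHermitian)
    (v w : n → ℝ) : v ⬝ᵥ A *ᵥ w = A *ᵥ v ⬝ᵥ w := by
  rw [dotProduct_mulVec, ← mulVec_transpose, ← conjTranspose_eq_transpose_of_trivial, hA]

namespace PosDef

variable {A : Matrix n n ℝ} (hA : A.PosDef) {t : ℝ} (ht : 0 ≤ t) (b : n → ℝ)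
include hA ht

theorem isUnit_iff_isUnit_add_smul_one : IsUnit A ↔ IsUnit (A + t • 1) :=
  iff_of_true hA.isUnit (hA.add_smul_one ht).isUnit

theorem inv_mulVec_sub_inv_add_smul_one_mulVec :
    A⁻¹ *ᵥ b - (A + t • 1)⁻¹ *ᵥ b = t • (A⁻¹ *ᵥ ((A + t • 1)⁻¹ *ᵥ b)) := by
  rw [← sub_mulVec, inv_sub_inv_add_smul_one (hA.isUnit_iff_isUnit_add_smul_one ht), smul_mulVec,
    mulVec_mulVec]

theorem inv_mulVec_sub_inv_add_smul_one_mulVec' :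
    A⁻¹ *ᵥ b - (A + t • 1)⁻¹ *ᵥ b = t • ((A + t • 1)⁻¹ *ᵥ (A⁻¹ *ᵥ b)) := by
  rw [← sub_mulVec, inv_sub_inv_add_smul_one' (hA.isUnit_iff_isUnit_add_smul_one ht),
    smul_mulVec, mulVec_mulVec]

theorem inv_add_smul_one_mulVec_dotProduct_self_le :
    (A + t • 1)⁻¹ *ᵥ b ⬝ᵥ (A + t • 1)⁻¹ *ᵥ b ≤ A⁻¹ *ᵥ b ⬝ᵥ (A + t • 1)⁻¹ *ᵥ b := by
  rw [← sub_nonneg, ← sub_dotProduct, dotProduct_comm, hA.inv_mulVec_sub_inv_add_smul_one_mulVec ht,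
    dotProduct_smul, smul_eq_mul]
  exact mul_nonneg ht (hA.inv.posSemidef.dotProduct_mulVec_nonneg _)

theorem inv_mulVec_dotProduct_inv_add_smul_one_mulVec_le :
    A⁻¹ *ᵥ b ⬝ᵥ (A + t • 1)⁻¹ *ᵥ b ≤ A⁻¹ *ᵥ b ⬝ᵥ A⁻¹ *ᵥ b := by
  rw [← sub_nonneg, ← dotProduct_sub, hA.inv_mulVec_sub_inv_add_smul_one_mulVec' ht,
    dotProduct_smul, smul_eq_mul]
  exact mul_nonneg ht ((hA.add_smul_one ht).inv.posSemidef.dotProduct_mulVec_nonneg _)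

theorem inv_add_smul_one_mulVec_dotProduct_self_le_inv_mulVec :
    (A + t • 1)⁻¹ *ᵥ b ⬝ᵥ (A + t • 1)⁻¹ *ᵥ b ≤ A⁻¹ *ᵥ b ⬝ᵥ A⁻¹ *ᵥ b :=
  (hA.inv_add_smul_one_mulVec_dotProduct_self_le ht b).trans
    (hA.inv_mulVec_dotProduct_inv_add_smul_one_mulVec_le ht b)

theorem dotProduct_inv_mulVec_sub_dotProduct_inv_add_smul_one_mulVec :
    b ⬝ᵥ A⁻¹ *ᵥ b - b ⬝ᵥ (A + t • 1)⁻¹ *ᵥ b = t * (A⁻¹ *ᵥ b ⬝ᵥ (A + t • 1)⁻¹ *ᵥ b) := by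
  rw [← dotProduct_sub, hA.inv_mulVec_sub_inv_add_smul_one_mulVec ht, dotProduct_smul,
    smul_eq_mul, hA.inv.isHermitian.dotProduct_mulVec_comm]

end PosDef

end Matrix

section DualFunction

variable {n : Type*} [Fintype n] [DecidableEq n]

noncomputable def dualFunction (R : Matrix n n ℝ) (b : n → ℝ) (c l : ℝ) : ℝ :=
  b ⬝ᵥ (R + l • 1)⁻¹ *ᵥ b + l * c

variable {R : Matrix n n ℝ} (hR : R.PosDef) (b : n → ℝ) {l₀ c : ℝ} (hl₀ : 0 ≤ l₀)
  (hc : (R + l₀ • 1)⁻¹ *ᵥ b ⬝ᵥ (R + l₀ • 1)⁻¹ *ᵥ b ≤ c)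
include hR hl₀ hc

theorem dualFunction_le_dualFunction {x y : ℝ} (hx : l₀ ≤ x) (hxy : x ≤ y) :
    dualFunction R b c x ≤ dualFunction R b c y := by
  have shift (s u : ℝ) : R + u • (1 : Matrix n n ℝ) = R + s • 1 + (u - s) • 1 := by
    rw [add_assoc, ← add_smul, add_sub_cancel]
  have hRx : (R + x • 1).PosDef := hR.add_smul_one (hl₀.trans hx)
  have hcross : (R + x • 1)⁻¹ *ᵥ b ⬝ᵥ (R + y • 1)⁻¹ *ᵥ b ≤ c := by
    rw [shift x y]
    refine (hRx.inv_mulVec_dotProduct_inv_add_smul_one_mulVec_le (sub_nonneg.2 hxy) b).trans ?_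
    rw [shift l₀ x]
    exact ((hR.add_smul_one hl₀).inv_add_smul_one_mulVec_dotProduct_self_le_inv_mulVec
      (sub_nonneg.2 hx) b).trans hc
  have hdiff := hRx.dotProduct_inv_mulVec_sub_dotProduct_inv_add_smul_one_mulVec
    (sub_nonneg.2 hxy) b
  rw [← shift x y] at hdiff
  unfold dualFunction
  linarith [mul_le_mul_of_nonneg_left hcross (sub_nonneg.2 hxy)]

theorem monotoneOn_dualFunction : MonotoneOn (dualFunction R b c) (Set.Ici l₀) :=
  fun _ hx _ _ hxy => dualFunction_le_dualFunction hR b hl₀ hc hx hxy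

end DualFunction

theorem dual_function_monotone_from_capacity_general (d : ℕ)
    (R : Matrix (Fin d) (Fin d) ℝ) (hR : R.PosDef) (b : Fin d → ℝ) (l₀ : ℝ)
    (hl₀ : 0 ≤ l₀) (c : ℝ)
    (hc : ((R + l₀ • (1 : Matrix (Fin d) (Fin d) ℝ))⁻¹).mulVec b
        ⬝ᵥ ((R + l₀ • (1 : Matrix (Fin d) (Fin d) ℝ))⁻¹).mulVec b ≤ c) :
    MonotoneOn
      (fun l : ℝ => b ⬝ᵥ ((R + l • (1 : Matrix (Fin d) (Fin d) ℝ))⁻¹).mulVec b + l * c)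
      (Set.Ici l₀)
    ∧ IsLeast
        ((fun l : ℝ => b ⬝ᵥ ((R + l • (1 : Matrix (Fin d) (Fin d) ℝ))⁻¹).mulVec b + l * c)
          '' Set.Ici l₀)
        (b ⬝ᵥ ((R + l₀ • (1 : Matrix (Fin d) (Fin d) ℝ))⁻¹).mulVec b + l₀ * c) := by
  have hmono := monotoneOn_dualFunction hR b hl₀ hc
  exact ⟨hmono, hmono.map_isLeast isLeast_Ici⟩

/-- If `c ≥ ‖(R + λ₀I)⁻¹b‖²` for some `λ₀ ≥ 0`, then the dual function
`g(λ) = bᵀ(R+λI)⁻¹b + λc` is monotone nondecreasing on `[λ₀, ∞)`; in particular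
`g(λ) ≥ g(λ₀)` for `λ ≥ λ₀`, so the infimum of `g` over `[λ₀, ∞)` is attained at `λ₀`. -/
theorem dual_function_monotone_from_capacity (d : ℕ) (hd : 1 ≤ d)
    (R : Matrix (Fin d) (Fin d) ℝ) (hR : R.PosDef) (b : Fin d → ℝ) (l₀ : ℝ)
    (hl₀ : 0 ≤ l₀) (c : ℝ)
    (hc : ((R + l₀ • (1 : Matrix (Fin d) (Fin d) ℝ))⁻¹).mulVec b
        ⬝ᵥ ((R + l₀ • (1 : Matrix (Fin d) (Fin d) ℝ))⁻¹).mulVec b ≤ c) :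
    MonotoneOn
      (fun l : ℝ => b ⬝ᵥ ((R + l • (1 : Matrix (Fin d) (Fin d) ℝ))⁻¹).mulVec b + l * c)
      (Set.Ici l₀)
    ∧ IsLeast
        ((fun l : ℝ => b ⬝ᵥ ((R + l • (1 : Matrix (Fin d) (Fin d) ℝ))⁻¹).mulVec b + l * c)
          '' Set.Ici l₀)
        (b ⬝ᵥ ((R + l₀ • (1 : Matrix (Fin d) (Fin d) ℝ))⁻¹).mulVec b + l₀ * c) :=
  dual_function_monotone_from_capacity_general d R hR b l₀ hl₀ c hc
end

section
/- Let R be a d×d real symmetric positive definite matrix, M a d×d real symmetric matrix whose largest eigenvalue λ₂ = λ_max(M) satisfies λ₂ > 0, let v be a unit eigenvector of M for λ₂, let b ∈ ℝ^d, and let ρ ≥ ‖(R + λ₂ I)⁻¹ b‖². Then the supremum over Γ ∈ ℝ^d and symmetric positive semidefinite d×d matrices Σ, subject to ‖Γ‖² + tr(Σ) ≤ ρ, of the functional 2 bᵀΓ − ΓᵀRΓ + tr(MΣ) equals bᵀ(R + λ₂ I)⁻¹ b + λ₂ ρ, and it is attained at Γ* = (R + λ₂ I)⁻¹ b and Σ*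 = (ρ − ‖Γ*‖²) · v vᵀ; in particular the energy constraint is active at the optimum: ‖Γ*‖² + tr(Σ*) = ρ. -/
/-!
With `A = R + λI` the objective is `2 bᵀΓ − ΓᵀAΓ + λ‖Γ‖² + tr(MΣ)`. Completing the square bounds
`2 bᵀΓ − ΓᵀAΓ` by `bᵀA⁻¹b`, with equality at `Γ = A⁻¹b`, and since `λI − M` and `Σ` are positive
semidefinite, `tr(MΣ) ≤ λ tr Σ`. Hence the objective is at most `bᵀA⁻¹b + λ(‖Γ‖² + tr Σ) ≤
bᵀA⁻¹b + λρ`, and the rank-one `Σ*` along the top eigenvector spends the remaining budget with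
`tr(MΣ*) = λ tr Σ*`.
-/

open Matrix

namespace Matrix

variable {n : Type*} [Fintype n]

open scoped ComplexOrder in
theorem PosSemidef.trace_mul_nonneg {𝕜 : Type*} [RCLike 𝕜] {A B : Matrix n n 𝕜}
    (hA : A.PosSemidef) (hB : B.PosSemidef) : 0 ≤ (A * B).trace := by
  classical
  open scoped MatrixOrder in
  obtain ⟨C, rfl⟩ := CStarAlgebra.nonneg_iff_eq_star_mul_self.mp hB.nonneg
  rw [star_eq_conjTranspose, ← Matrix.mul_assoc, trace_mul_comm, ← Matrix.mul_assoc]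
  exact (hA.mul_mul_conjTranspose_same C).trace_nonneg

variable [DecidableEq n]

theorem IsHermitian.posSemidef_smul_one_sub {M : Matrix n n ℝ} (hM : M.IsHermitian) {c : ℝ}
    (hc : ∀ (μ : ℝ) (w : n → ℝ), w ≠ 0 → M *ᵥ w = μ • w → μ ≤ c) :
    (c • 1 - M).PosSemidef := by
  have hH : (c • 1 - M).IsHermitian := (isHermitian_one.smul (IsSelfAdjoint.all c)).sub hM
  refine hH.posSemidef_iff_eigenvalues_nonneg.mpr fun i => ?_
  set w := (hH.eigenvectorBasis i).ofLp
  have hMw : M *ᵥ w = (c - hH.eigenvalues i) • w := by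
    have hw := hH.mulVec_eigenvectorBasis i
    rw [sub_mulVec, smul_mulVec, one_mulVec, sub_eq_iff_eq_add, ← sub_eq_iff_eq_add', ← sub_smul]
      at hw
    exact hw.symm
  have hne : w ≠ 0 := (WithLp.ofLp_eq_zero 2).not.mpr (hH.eigenvectorBasis.orthonormal.ne_zero i)
  have hle := hc _ w hne hMw
  show (0 : ℝ) ≤ _
  linarith

theorem trace_mul_le_of_posSemidef_smul_one_sub {M S : Matrix n n ℝ} {c : ℝ}
    (hM : (c • 1 - M).PosSemidef) (hS : S.PosSemidef) : (M * S).trace ≤ c * S.trace := by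
  have := PosSemidef.trace_mul_nonneg hM hS
  rw [Matrix.sub_mul, trace_sub, Matrix.smul_mul, Matrix.one_mul, trace_smul, smul_eq_mul] at this
  linarith

theorem PosDef.sub_dotProduct_mulVec_sub {A : Matrix n n ℝ} (hA : A.PosDef) (b x : n → ℝ) :
    (x - A⁻¹ *ᵥ b) ⬝ᵥ A *ᵥ (x - A⁻¹ *ᵥ b) = x ⬝ᵥ A *ᵥ x - 2 * (b ⬝ᵥ x) + b ⬝ᵥ A⁻¹ *ᵥ b := by
  have hAg : A *ᵥ A⁻¹ *ᵥ b = b := by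
    rw [mulVec_mulVec, mul_nonsing_inv A (isUnit_iff_ne_zero.mpr hA.det_pos.ne'), one_mulVec]
  have hsymm : ∀ y z : n → ℝ, y ⬝ᵥ A *ᵥ z = z ⬝ᵥ A *ᵥ y := fun y z => by
    rw [dotProduct_mulVec, ← mulVec_transpose, dotProduct_comm,
      ← conjTranspose_eq_transpose_of_trivial, hA.isHermitian.eq]
  rw [mulVec_sub, dotProduct_sub, sub_dotProduct, sub_dotProduct, hAg, hsymm (A⁻¹ *ᵥ b) x, hAg,
    dotProduct_comm x b, dotProduct_comm (A⁻¹ *ᵥ b) b]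
  ring

theorem PosDef.two_mul_dotProduct_sub_le {A : Matrix n n ℝ} (hA : A.PosDef) (b x : n → ℝ) :
    2 * (b ⬝ᵥ x) - x ⬝ᵥ A *ᵥ x ≤ b ⬝ᵥ A⁻¹ *ᵥ b := by
  have := hA.posSemidef.dotProduct_mulVec_nonneg (x - A⁻¹ *ᵥ b)
  rw [star_trivial, hA.sub_dotProduct_mulVec_sub] at this
  linarith

end Matrix

theorem maximizer_subproblem_active_general (d : ℕ)
    (R M : Matrix (Fin d) (Fin d) ℝ) (hR : R.PosDef) (hM : M.IsSymm)
    (lam : ℝ)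
    (hlam : IsGreatest {x : ℝ | ∃ w : Fin d → ℝ, w ≠ 0 ∧ M.mulVec w = x • w} lam)
    (hlam_pos : 0 < lam)
    (v : Fin d → ℝ) (hv : M.mulVec v = lam • v) (hv_unit : (∑ i, v i ^ 2) = 1)
    (b : Fin d → ℝ) (ρ : ℝ)
    (hρ : ((R + lam • (1 : Matrix (Fin d) (Fin d) ℝ))⁻¹).mulVec b
        ⬝ᵥ ((R + lam • (1 : Matrix (Fin d) (Fin d) ℝ))⁻¹).mulVec b ≤ ρ) :
    IsGreatest {x : ℝ | ∃ (Γ : Fin d → ℝ) (S : Matrix (Fin d) (Fin d) ℝ),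
        S.PosSemidef ∧ Γ ⬝ᵥ Γ + S.trace ≤ ρ ∧
        x = 2 * (b ⬝ᵥ Γ) - Γ ⬝ᵥ R.mulVec Γ + (M * S).trace}
      (b ⬝ᵥ ((R + lam • (1 : Matrix (Fin d) (Fin d) ℝ))⁻¹).mulVec b + lam * ρ)
    ∧ ((ρ - ((R + lam • (1 : Matrix (Fin d) (Fin d) ℝ))⁻¹).mulVec b
          ⬝ᵥ ((R + lam • (1 : Matrix (Fin d) (Fin d) ℝ))⁻¹).mulVec b)
        • Matrix.vecMulVec v v).PosSemidef
    ∧ (2 * (b ⬝ᵥ ((R + lam • (1 : Matrix (Fin d) (Fin d) ℝ))⁻¹).mulVec b)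
        - ((R + lam • (1 : Matrix (Fin d) (Fin d) ℝ))⁻¹).mulVec b
            ⬝ᵥ R.mulVec (((R + lam • (1 : Matrix (Fin d) (Fin d) ℝ))⁻¹).mulVec b)
        + (M * ((ρ - ((R + lam • (1 : Matrix (Fin d) (Fin d) ℝ))⁻¹).mulVec b
              ⬝ᵥ ((R + lam • (1 : Matrix (Fin d) (Fin d) ℝ))⁻¹).mulVec b)
            • Matrix.vecMulVec v v)).trace
        = b ⬝ᵥ ((R + lam • (1 : Matrix (Fin d) (Fin d) ℝ))⁻¹).mulVec b + lam * ρ)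
    ∧ (((R + lam • (1 : Matrix (Fin d) (Fin d) ℝ))⁻¹).mulVec b
          ⬝ᵥ ((R + lam • (1 : Matrix (Fin d) (Fin d) ℝ))⁻¹).mulVec b
        + ((ρ - ((R + lam • (1 : Matrix (Fin d) (Fin d) ℝ))⁻¹).mulVec b
              ⬝ᵥ ((R + lam • (1 : Matrix (Fin d) (Fin d) ℝ))⁻¹).mulVec b)
            • Matrix.vecMulVec v v).trace = ρ) := by
  set A := R + lam • (1 : Matrix (Fin d) (Fin d) ℝ)
  set g := A⁻¹ *ᵥ b
  have hA : A.PosDef := hR.add_posSemidef (PosSemidef.one.smul hlam_pos.le)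
  have hquad (x : Fin d → ℝ) : x ⬝ᵥ A *ᵥ x = x ⬝ᵥ R *ᵥ x + lam * (x ⬝ᵥ x) := by
    simp only [A, add_mulVec, smul_mulVec, one_mulVec, dotProduct_add, dotProduct_smul, smul_eq_mul]
  have hgap : (lam • 1 - M).PosSemidef :=
    (isHermitian_iff_isSymm.mpr hM).posSemidef_smul_one_sub fun μ w hw h => hlam.2 ⟨w, hw, h⟩
  have hvv : v ⬝ᵥ v = 1 := by simpa [dotProduct, sq] using hv_unit
  have hSstar : ((ρ - g ⬝ᵥ g) • vecMulVec v v).PosSemidef := by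
    simpa using (posSemidef_vecMulVec_self_star v).smul (sub_nonneg.mpr hρ)
  have hactive : g ⬝ᵥ g + ((ρ - g ⬝ᵥ g) • vecMulVec v v).trace = ρ := by
    simp [hvv]
  have hval : 2 * (b ⬝ᵥ g) - g ⬝ᵥ R *ᵥ g + (M * ((ρ - g ⬝ᵥ g) • vecMulVec v v)).trace
      = b ⬝ᵥ g + lam * ρ := by
    have hbg : g ⬝ᵥ A *ᵥ g = b ⬝ᵥ g := by
      have := hA.sub_dotProduct_mulVec_sub b g
      rw [sub_self, zero_dotProduct] at this
      linarith
    rw [Matrix.mul_smul, mul_vecMulVec, trace_smul, trace_vecMulVec, hv, smul_dotProduct, hvv]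
    simp only [smul_eq_mul]
    linarith [hquad g]
  refine ⟨⟨⟨g, _, hSstar, hactive.le, hval.symm⟩, ?_⟩, hSstar, hval, hactive⟩
  rintro _ ⟨Γ, S, hSpsd, hfeas, rfl⟩
  have hmean := hA.two_mul_dotProduct_sub_le b Γ
  have hvar := trace_mul_le_of_posSemidef_smul_one_sub hgap hSpsd
  have hbudget := mul_le_mul_of_nonneg_left (le_sub_iff_add_le'.mpr hfeas) hlam_pos.le
  rw [hquad] at hmean
  linarith

/-- Active (variance-injection) case of the maximizer's subproblem. For
`R` symmetric positive definite, `M` symmetric with largest eigenvalue `lam > 0`, `v` a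
unit eigenvector of `M` for `lam`, and `ρ ≥ ‖(R+lam·I)⁻¹b‖²`, the supremum of
`2bᵀΓ − ΓᵀRΓ + tr(MΣ)` over `Γ` and positive semidefinite `Σ` with `‖Γ‖² + tr Σ ≤ ρ`
equals `bᵀ(R+lam·I)⁻¹b + lam·ρ`, attained at `Γ* = (R+lam·I)⁻¹b` and
`Σ* = (ρ − ‖Γ*‖²)·vvᵀ`; in particular the energy constraint is active at the optimum. -/
theorem maximizer_subproblem_active (d : ℕ) (hd : 1 ≤ d)
    (R M : Matrix (Fin d) (Fin d) ℝ) (hR : R.PosDef) (hM : M.IsSymm)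
    (lam : ℝ)
    (hlam : IsGreatest {x : ℝ | ∃ w : Fin d → ℝ, w ≠ 0 ∧ M.mulVec w = x • w} lam)
    (hlam_pos : 0 < lam)
    (v : Fin d → ℝ) (hv : M.mulVec v = lam • v) (hv_unit : (∑ i, v i ^ 2) = 1)
    (b : Fin d → ℝ) (ρ : ℝ)
    (hρ : ((R + lam • (1 : Matrix (Fin d) (Fin d) ℝ))⁻¹).mulVec b
        ⬝ᵥ ((R + lam • (1 : Matrix (Fin d) (Fin d) ℝ))⁻¹).mulVec b ≤ ρ) :
    IsGreatest {x : ℝ | ∃ (Γ : Fin d → ℝ) (S : Matrix (Fin d) (Fin d) ℝ),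
        S.PosSemidef ∧ Γ ⬝ᵥ Γ + S.trace ≤ ρ ∧
        x = 2 * (b ⬝ᵥ Γ) - Γ ⬝ᵥ R.mulVec Γ + (M * S).trace}
      (b ⬝ᵥ ((R + lam • (1 : Matrix (Fin d) (Fin d) ℝ))⁻¹).mulVec b + lam * ρ)
    ∧ ((ρ - ((R + lam • (1 : Matrix (Fin d) (Fin d) ℝ))⁻¹).mulVec b
          ⬝ᵥ ((R + lam • (1 : Matrix (Fin d) (Fin d) ℝ))⁻¹).mulVec b)
        • Matrix.vecMulVec v v).PosSemidef
    ∧ (2 * (b ⬝ᵥ ((R + lam • (1 : Matrix (Fin d) (Fin d) ℝ))⁻¹).mulVec b)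
        - ((R + lam • (1 : Matrix (Fin d) (Fin d) ℝ))⁻¹).mulVec b
            ⬝ᵥ R.mulVec (((R + lam • (1 : Matrix (Fin d) (Fin d) ℝ))⁻¹).mulVec b)
        + (M * ((ρ - ((R + lam • (1 : Matrix (Fin d) (Fin d) ℝ))⁻¹).mulVec b
              ⬝ᵥ ((R + lam • (1 : Matrix (Fin d) (Fin d) ℝ))⁻¹).mulVec b)
            • Matrix.vecMulVec v v)).trace
        = b ⬝ᵥ ((R + lam • (1 : Matrix (Fin d) (Fin d) ℝ))⁻¹).mulVec b + lam * ρ)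
    ∧ (((R + lam • (1 : Matrix (Fin d) (Fin d) ℝ))⁻¹).mulVec b
          ⬝ᵥ ((R + lam • (1 : Matrix (Fin d) (Fin d) ℝ))⁻¹).mulVec b
        + ((ρ - ((R + lam • (1 : Matrix (Fin d) (Fin d) ℝ))⁻¹).mulVec b
              ⬝ᵥ ((R + lam • (1 : Matrix (Fin d) (Fin d) ℝ))⁻¹).mulVec b)
            • Matrix.vecMulVec v v).trace = ρ) :=
  maximizer_subproblem_active_general d R M hR hM lam hlam hlam_pos v hv hv_unit b ρ hρ
end
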